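/- Every topologically transitive McNaughton homeomorphism of [0,1]ⁿ is chaotic in the sense of Devaney: if S is a McNaughton homeomorphism of [0,1]ⁿ such that for all nonempty open U, V ⊆ [0,1]ⁿ there exists an integer k ≥ 1 with S^k(U) ∩ V ≠ ∅, then the set of points of [0,1]ⁿ with finite S-orbit {Sⁿ(p) : n ∈ ℤ} is dense in [0,1]ⁿ, and S has sensitive dependence on initial conditions (there exists δ > 0 such that for every p ∈ [0,1]ⁿ and every ε > 0 there are q ∈ [0,1]ⁿ with |p − q| < ε and an integer k ≥ 0 with |S^k(p) − S^k(q)| ≥ δ). -/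

import Mathlib

open Real MeasureTheory Set

/-- The unit cube `[0,1]ⁿ`. -/
def cube (n : ℕ) : Set (Fin n → ℝ) := Icc 0 1

/-- The piecewise-linear data of a McNaughton homeomorphism: finitely many matrices
`P₁, …, P_k ∈ GL_{n+1}(ℤ)` with last row `(0 … 0 1)` and closed sets `C₁, …, C_k`
covering the cube, such that on `C_j` the map `S` is given in homogeneous coordinates
by `P_j`. -/
def McNData (n : ℕ) (S : (Fin n → ℝ) → (Fin n → ℝ)) : Prop :=
  ∃ (k : ℕ) (P : Fin k → Matrix (Fin (n + 1)) (Fin (n + 1)) ℤ)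
      (C : Fin k → Set (Fin n → ℝ)),
    (∀ j, IsUnit (P j).det) ∧
    (∀ j (i : Fin (n + 1)), P j (Fin.last n) i = if i = Fin.last n then 1 else 0) ∧
    (∀ j, IsClosed (C j)) ∧
    (⋃ j, C j) = cube n ∧
    ∀ j, ∀ p ∈ C j, ∀ i : Fin n,
      S p i = (∑ i' : Fin n, ((P j i.castSucc i'.castSucc : ℤ) : ℝ) * p i') +
        ((P j i.castSucc (Fin.last n) : ℤ) : ℝ)

/-- `S` is a McNaughton homeomorphism of `[0,1]ⁿ`: a self-homeomorphism of the cube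
given piecewise by integer unimodular affine maps. -/
def IsMcNHomeo (n : ℕ) (S : (Fin n → ℝ) → (Fin n → ℝ)) : Prop :=
  ContinuousOn S (cube n) ∧ MapsTo S (cube n) (cube n) ∧
  (∃ T : (Fin n → ℝ) → (Fin n → ℝ), ContinuousOn T (cube n) ∧
    MapsTo T (cube n) (cube n) ∧ InvOn T S (cube n) (cube n)) ∧
  McNData n S

/-- The `z`-th iterate (`z ∈ ℤ`) of `S`, computed using a two-sided inverse `T`. -/
def zIterC (n : ℕ) (S T : (Fin n → ℝ) → (Fin n → ℝ)) (p : Fin n → ℝ) (z : ℤ) :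
    Fin n → ℝ :=
  if 0 ≤ z then S^[z.toNat] p else T^[(-z).toNat] p

def Fd (n d : ℕ) : Set (Fin n → ℝ) :=
  {p | p ∈ cube n ∧ ∀ i, ∃ a : ℤ, p i * d = a}

lemma mem_cube_iff {n : ℕ} {p : Fin n → ℝ} :
    p ∈ cube n ↔ ∀ i, 0 ≤ p i ∧ p i ≤ 1 := by
  constructor
  · rintro ⟨h1, h2⟩ i; exact ⟨h1 i, h2 i⟩
  · intro h; exact ⟨fun i => (h i).1, fun i => (h i).2⟩

lemma fd_finite (n : ℕ) {d : ℕ} (hd : 0 < d) : (Fd n d).Finite := by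
  have hd' : (0:ℝ) < d := by exact_mod_cast hd
  have hsub : Fd n d ⊆ (fun a : Fin n → ℤ => fun i => (a i : ℝ) / d) ''
      (Set.pi Set.univ fun _ => Set.Icc (0:ℤ) d) := by
    rintro p ⟨hp, ha⟩
    choose a haa using ha
    refine ⟨a, fun i _ => ?_, ?_⟩
    · obtain ⟨h0, h1⟩ := mem_cube_iff.1 hp i
      constructor
      · have : (0:ℝ) ≤ (a i : ℝ) := by rw [← haa i]; positivity
        exact_mod_cast this
      · have : (a i : ℝ) ≤ (d : ℝ) := by rw [← haa i]; nlinarith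
        exact_mod_cast this
    · funext i
      rw [div_eq_iff hd'.ne']
      linarith [haa i]
  exact Set.Finite.subset (Set.Finite.image _ (Set.Finite.pi fun _ => Set.finite_Icc _ _)) hsub

lemma S_maps_Fd {n : ℕ} {S : (Fin n → ℝ) → (Fin n → ℝ)}
    (hSm : MapsTo S (cube n) (cube n)) (hdata : McNData n S) (d : ℕ) :
    MapsTo S (Fd n d) (Fd n d) := by
  obtain ⟨k, P, C, -, -, -, hcover, hform⟩ := hdata
  rintro p ⟨hp, ha⟩
  choose a haa using ha
  have hpC : p ∈ ⋃ j, C j := hcover ▸ hp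
  obtain ⟨j, hj⟩ := Set.mem_iUnion.1 hpC
  refine ⟨hSm hp, fun i => ?_⟩
  refine ⟨∑ i' : Fin n, P j i.castSucc i'.castSucc * a i' +
    P j i.castSucc (Fin.last n) * d, ?_⟩
  rw [hform j p hj i]
  push_cast
  rw [add_mul, Finset.sum_mul]
  congr 1
  refine Finset.sum_congr rfl fun i' _ => ?_
  rw [mul_assoc, haa i']

lemma T_maps_Fd {n : ℕ} {S T : (Fin n → ℝ) → (Fin n → ℝ)}
    (hSm : MapsTo S (cube n) (cube n))
    (hinv : InvOn T S (cube n) (cube n)) (hdata : McNData n S)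
    {d : ℕ} (hd : 0 < d) : MapsTo T (Fd n d) (Fd n d) := by
  have hfin := fd_finite n hd
  have hmaps := S_maps_Fd hSm hdata d
  have hsub : Fd n d ⊆ cube n := fun p hp => hp.1
  have hinj : InjOn S (Fd n d) := (hinv.1.injOn).mono hsub
  have hbij : BijOn S (Fd n d) (Fd n d) :=
    (hfin.injOn_iff_bijOn_of_mapsTo hmaps).1 hinj
  intro q hq
  obtain ⟨p, hp, hpq⟩ := hbij.surjOn hq
  have : T q = p := by rw [← hpq]; exact hinv.1 (hsub hp)
  rw [this]; exact hp

lemma orbit_subset_Fd {n : ℕ} {S T : (Fin n → ℝ) → (Fin n → ℝ)}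
    (hSm : MapsTo S (cube n) (cube n))
    (hinv : InvOn T S (cube n) (cube n)) (hdata : McNData n S)
    {d : ℕ} (hd : 0 < d) {p : Fin n → ℝ} (hp : p ∈ Fd n d) :
    Set.range (zIterC n S T p) ⊆ Fd n d := by
  rintro _ ⟨z, rfl⟩
  unfold zIterC
  split
  · exact (S_maps_Fd hSm hdata d).iterate _ hp
  · exact (T_maps_Fd hSm hinv hdata hd).iterate _ hp

lemma dense_finite_orbit {n : ℕ} {S T : (Fin n → ℝ) → (Fin n → ℝ)}
    (hSm : MapsTo S (cube n) (cube n))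
    (hinv : InvOn T S (cube n) (cube n)) (hdata : McNData n S) :
    cube n ⊆ closure {p | p ∈ cube n ∧ (Set.range (zIterC n S T p)).Finite} := by
  intro p hp
  rw [Metric.mem_closure_iff]
  intro ε hε
  obtain ⟨d, hdgt⟩ := exists_nat_gt (max 1 (1/ε))
  have hd0 : 0 < d := by
    have h1 : (1:ℝ) < d := lt_of_le_of_lt (le_max_left _ _) hdgt
    have : (1:ℕ) < d := by exact_mod_cast h1
    omega
  have hd' : (0:ℝ) < d := by exact_mod_cast hd0
  have hεd : 1 < ε * d := by
    have h1 : 1/ε < d := lt_of_le_of_lt (le_max_right _ _) hdgt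
    rw [div_lt_iff₀ hε] at h1
    nlinarith
  set q : Fin n → ℝ := fun i => (⌊p i * d⌋ : ℝ) / d with hq
  have hqd : ∀ i, q i * d = ((⌊p i * d⌋ : ℤ) : ℝ) := fun i =>
    div_mul_cancel₀ _ hd'.ne'
  have hfl : ∀ i, (⌊p i * d⌋ : ℝ) ≤ p i * d := fun i => Int.floor_le _
  have hfl' : ∀ i, p i * d < (⌊p i * d⌋ : ℝ) + 1 := fun i => Int.lt_floor_add_one _
  have hpc := mem_cube_iff.1 hp
  have hqcube : q ∈ cube n := by
    rw [mem_cube_iff]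
    intro i
    obtain ⟨h0, h1⟩ := hpc i
    constructor
    · apply div_nonneg _ hd'.le
      have : (0:ℝ) ≤ ⌊p i * d⌋ := by
        exact_mod_cast Int.floor_nonneg.2 (by positivity)
      exact this
    · rw [div_le_one hd']
      nlinarith [hfl i]
  have hqFd : q ∈ Fd n d := ⟨hqcube, fun i => ⟨⌊p i * d⌋, hqd i⟩⟩
  refine ⟨q, ⟨hqcube, Set.Finite.subset (fd_finite n hd0)
    (orbit_subset_Fd hSm hinv hdata hd0 hqFd)⟩, ?_⟩
  rw [dist_pi_lt_iff hε]
  intro i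
  rw [Real.dist_eq, abs_lt]
  constructor <;> nlinarith [hfl i, hfl' i, hqd i]

lemma iter_contOn {n : ℕ} {S : (Fin n → ℝ) → (Fin n → ℝ)}
    (hSc : ContinuousOn S (cube n)) (hSm : MapsTo S (cube n) (cube n)) :
    ∀ m : ℕ, ContinuousOn S^[m] (cube n) := by
  intro m
  induction m with
  | zero => simpa using continuousOn_id
  | succ m ih =>
    rw [Function.iterate_succ']
    exact hSc.comp ih (hSm.iterate m)

lemma iter_injOn {n : ℕ} {S T : (Fin n → ℝ) → (Fin n → ℝ)}
    (hSm : MapsTo S (cube n) (cube n)) (hinv : InvOn T S (cube n) (cube n)) :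
    ∀ m : ℕ, InjOn S^[m] (cube n) := by
  have hinjS : InjOn S (cube n) := hinv.1.injOn
  intro m
  induction m with
  | zero => simpa using injOn_id _
  | succ m ih =>
    intro x hx y hy hxy
    rw [Function.iterate_succ_apply', Function.iterate_succ_apply'] at hxy
    exact ih hx hy (hinjS (hSm.iterate m hx) (hSm.iterate m hy) hxy)

lemma exists_period {n : ℕ} {S T : (Fin n → ℝ) → (Fin n → ℝ)}
    (hSm : MapsTo S (cube n) (cube n)) (hinv : InvOn T S (cube n) (cube n))
    {p : Fin n → ℝ} (hp : p ∈ cube n)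
    (hfin : (Set.range (zIterC n S T p)).Finite) :
    ∃ m : ℕ, 1 ≤ m ∧ S^[m] p = p := by
  have hsub : Set.range (fun i : ℕ => S^[i] p) ⊆ Set.range (zIterC n S T p) := by
    rintro _ ⟨i, rfl⟩
    exact ⟨(i:ℤ), by simp [zIterC]⟩
  have hfin' := hfin.subset hsub
  haveI := hfin'.to_subtype
  obtain ⟨a, b, hab, heq⟩ := Finite.exists_ne_map_eq_of_infinite
    (fun i : ℕ => (⟨S^[i] p, Set.mem_range_self i⟩ :
      Set.range (fun i : ℕ => S^[i] p)))
  have heq' : S^[a] p = S^[b] p := congrArg Subtype.val heq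
  have key : ∀ a b : ℕ, a < b → S^[a] p = S^[b] p → ∃ m : ℕ, 1 ≤ m ∧ S^[m] p = p := by
    intro a b hlt h
    refine ⟨b - a, by omega, ?_⟩
    have hb : b = a + (b - a) := by omega
    rw [hb, Function.iterate_add_apply] at h
    exact iter_injOn hSm hinv a (hSm.iterate _ hp) hp h.symm
  rcases lt_or_gt_of_ne hab with h | h
  · exact key a b h heq'
  · exact key b a h heq'.symm

lemma exists_open_nbhd {n : ℕ} {S : (Fin n → ℝ) → (Fin n → ℝ)}
    (hSc : ContinuousOn S (cube n)) (hSm : MapsTo S (cube n) (cube n))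
    (q : Fin n → ℝ) (hq : q ∈ cube n) (m : ℕ) (δ : ℝ) (hδ : 0 < δ) :
    ∃ u : Set (Fin n → ℝ), IsOpen u ∧ q ∈ u ∧
      ∀ x ∈ u ∩ cube n, ∀ i ≤ m, dist (S^[i] x) (S^[i] q) < δ := by
  set F : (Fin n → ℝ) → (Fin (m+1) → (Fin n → ℝ)) :=
    fun x => fun i => S^[(i:ℕ)] x with hF
  have hFc : ContinuousOn F (cube n) :=
    continuousOn_pi.2 fun i => iter_contOn hSc hSm (i:ℕ)
  set t : Set (Fin (m+1) → (Fin n → ℝ)) :=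
    Set.pi Set.univ (fun i => Metric.ball (S^[(i:ℕ)] q) δ) with ht
  have htop : IsOpen t := isOpen_set_pi Set.finite_univ (fun a _ => Metric.isOpen_ball)
  obtain ⟨u, hu, huv⟩ := (continuousOn_iff'.1 hFc) t htop
  have hqmem : q ∈ F ⁻¹' t ∩ cube n := by
    refine ⟨fun i _ => ?_, hq⟩
    simpa [hF] using hδ
  rw [huv] at hqmem
  refine ⟨u, hu, hqmem.1, ?_⟩
  intro x hx i hi
  rw [← huv] at hx
  have := hx.1 ⟨i, Nat.lt_succ_of_le hi⟩ (Set.mem_univ _)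
  simpa using this

/-- Every topologically transitive McNaughton homeomorphism of `[0,1]ⁿ` is chaotic in
the sense of Devaney: the points with finite orbit are dense, and it has sensitive
dependence on initial conditions. -/
theorem mcnaughton_transitive_chaotic (n : ℕ) (hn : 1 ≤ n)
    (S T : (Fin n → ℝ) → (Fin n → ℝ))
    (hSc : ContinuousOn S (cube n)) (hSm : MapsTo S (cube n) (cube n))
    (hTc : ContinuousOn T (cube n)) (hTm : MapsTo T (cube n) (cube n))
    (hinv : InvOn T S (cube n) (cube n)) (hdata : McNData n S)
    (htrans : ∀ U V : Set (Fin n → ℝ), IsOpen U → IsOpen V →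
      (U ∩ cube n).Nonempty → (V ∩ cube n).Nonempty →
      ∃ k : ℕ, 1 ≤ k ∧ (S^[k] '' (U ∩ cube n) ∩ (V ∩ cube n)).Nonempty) :
    (cube n ⊆ closure {p | p ∈ cube n ∧ (Set.range (zIterC n S T p)).Finite}) ∧
    (∃ δ : ℝ, 0 < δ ∧ ∀ p ∈ cube n, ∀ ε : ℝ, 0 < ε →
      ∃ q ∈ cube n, dist p q < ε ∧ ∃ k : ℕ, δ ≤ dist (S^[k] p) (S^[k] q)) := by
  have hdense := dense_finite_orbit hSm hinv hdata
  refine ⟨hdense, ?_⟩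
  -- first finite orbit: orbit of 0
  have h0cube : (0 : Fin n → ℝ) ∈ cube n := by
    rw [mem_cube_iff]; intro i; norm_num
  have h0Fd : (0 : Fin n → ℝ) ∈ Fd n 1 := by
    refine ⟨h0cube, fun i => ⟨0, by norm_num⟩⟩
  set O1 : Set (Fin n → ℝ) := Set.range (fun i : ℕ => S^[i] (0 : Fin n → ℝ)) with hO1
  have hO1fin : O1.Finite := by
    refine (fd_finite n one_pos).subset ?_
    rintro _ ⟨i, rfl⟩
    exact (S_maps_Fd hSm hdata 1).iterate i h0Fd
  have hO1ne : O1.Nonempty := ⟨_, Set.mem_range_self 0⟩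
  -- a point outside O1
  have hcubeInf : (cube n).Infinite := by
    have hinj : Set.InjOn (fun t : ℝ => (fun _ : Fin n => t)) (Set.Icc 0 1) := by
      intro a _ b _ hab
      exact congrFun hab ⟨0, hn⟩
    have himg := Set.Infinite.image hinj (Set.Icc_infinite zero_lt_one)
    refine himg.mono ?_
    rintro _ ⟨t, ht, rfl⟩
    rw [mem_cube_iff]; intro i; exact ⟨ht.1, ht.2⟩
  obtain ⟨pstar, hpsc, hpsO⟩ := (hcubeInf.diff hO1fin).nonempty
  obtain ⟨x0, hx0, hx0min⟩ := Finset.exists_min_image hO1fin.toFinset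
    (fun x => dist pstar x) (by simpa using hO1ne)
  have hx0O1 : x0 ∈ O1 := hO1fin.mem_toFinset.1 hx0
  have hρpos : 0 < dist pstar x0 := by
    rw [dist_pos]
    rintro rfl
    exact hpsO hx0O1
  -- second periodic point q2 ∉ O1
  have hclose := Metric.mem_closure_iff.1 (hdense hpsc) _ hρpos
  obtain ⟨q2, ⟨hq2c, hq2fin⟩, hq2d⟩ := hclose
  have hq2O1 : q2 ∉ O1 := by
    intro h
    have := hx0min q2 (hO1fin.mem_toFinset.2 h)
    linarith
  obtain ⟨m2, hm2, hm2eq⟩ := exists_period hSm hinv hq2c hq2fin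
  set O2 : Set (Fin n → ℝ) := Set.range (fun i : ℕ => S^[i] q2) with hO2
  have hO2fin : O2.Finite := by
    refine hq2fin.subset ?_
    rintro _ ⟨i, rfl⟩
    exact ⟨(i:ℤ), by simp [zIterC]⟩
  have hO2ne : O2.Nonempty := ⟨_, Set.mem_range_self 0⟩
  -- disjointness
  have hdisj : ∀ x ∈ O1, ∀ y ∈ O2, x ≠ y := by
    rintro _ ⟨i, rfl⟩ _ ⟨i', rfl⟩ hxy
    apply hq2O1
    have hlt : i' < m2 * (i' + 1) := by
      calc i' < i' + 1 := Nat.lt_succ_self _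
      _ ≤ m2 * (i' + 1) := Nat.le_mul_of_pos_left _ hm2
    set e := m2 * (i' + 1) - i' with he
    have hcyc : S^[m2 * (i' + 1)] q2 = q2 := by
      rw [Function.iterate_mul]
      exact Function.iterate_fixed hm2eq _
    have hq2e : S^[e] (S^[i'] q2) = q2 := by
      rw [← Function.iterate_add_apply]
      have : e + i' = m2 * (i' + 1) := by omega
      rw [this, hcyc]
    refine ⟨e + i, ?_⟩
    show S^[e + i] (0 : Fin n → ℝ) = q2
    have hxy' : S^[i] (0 : Fin n → ℝ) = S^[i'] q2 := hxy
    rw [Function.iterate_add_apply, hxy', hq2e]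
  -- minimal distance between orbits
  obtain ⟨xy, hxy, hxymin⟩ := Finset.exists_min_image
    (hO1fin.toFinset ×ˢ hO2fin.toFinset) (fun pr => dist pr.1 pr.2)
    (Finset.Nonempty.product (by simpa using hO1ne) (by simpa using hO2ne))
  rw [Finset.mem_product, hO1fin.mem_toFinset, hO2fin.mem_toFinset] at hxy
  set δ0 : ℝ := dist xy.1 xy.2 with hδ0def
  have hδ0 : 0 < δ0 := dist_pos.2 (hdisj _ hxy.1 _ hxy.2)
  have hmin : ∀ x ∈ O1, ∀ y ∈ O2, δ0 ≤ dist x y := by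
    intro x hx y hy
    exact hxymin (x, y) (Finset.mem_product.2
      ⟨hO1fin.mem_toFinset.2 hx, hO2fin.mem_toFinset.2 hy⟩)
  refine ⟨δ0 / 8, by positivity, ?_⟩
  intro p hp ε hε
  set ε' : ℝ := min ε (δ0 / 8) with hε'def
  have hε' : 0 < ε' := lt_min hε (by positivity)
  have hε'ε : ε' ≤ ε := min_le_left _ _
  have hε'δ : ε' ≤ δ0 / 8 := min_le_right _ _
  -- choose an orbit far from p
  have hfar : ∃ q, q ∈ cube n ∧ ∀ i : ℕ, δ0 / 2 ≤ dist p (S^[i] q) := by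
    by_cases hcase : ∀ y ∈ O1, δ0 / 2 ≤ dist p y
    · exact ⟨0, h0cube, fun i => hcase _ (Set.mem_range_self i)⟩
    · push_neg at hcase
      obtain ⟨y1, hy1, hy1d⟩ := hcase
      refine ⟨q2, hq2c, fun i => ?_⟩
      have h1 := hmin y1 hy1 (S^[i] q2) (Set.mem_range_self i)
      have h2 := dist_triangle y1 p (S^[i] q2)
      have h3 : dist y1 p = dist p y1 := dist_comm _ _
      linarith
  obtain ⟨q, hqc, hqfar⟩ := hfar
  -- periodic point r near p
  obtain ⟨r, ⟨hrc, hrfin⟩, hrd⟩ := Metric.mem_closure_iff.1 (hdense hp) _ hε'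
  obtain ⟨m, hm1, hmeq⟩ := exists_period hSm hinv hrc hrfin
  -- open neighborhood of q controlling m iterates
  obtain ⟨u, hu, hqu, huprop⟩ := exists_open_nbhd hSc hSm q hqc m (δ0 / 8) (by positivity)
  -- transitivity
  obtain ⟨k, hk1, y, hy1, hy2⟩ := htrans (Metric.ball p ε') u Metric.isOpen_ball hu
    ⟨p, Metric.mem_ball_self hε', hp⟩ ⟨q, hqu, hqc⟩
  obtain ⟨w, hwmem, rfl⟩ := hy1
  have hwball : dist w p < ε' := hwmem.1
  have hwc : w ∈ cube n := hwmem.2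
  -- choose j
  set j : ℕ := m * (k / m + 1) with hj
  have hdm := Nat.div_add_mod k m
  have hmod := Nat.mod_lt k (show 0 < m by omega)
  have hkj : k < j := by
    have : j = m * (k / m) + m := by rw [hj]; ring
    omega
  set e : ℕ := j - k with he
  have hem : e ≤ m := by
    have : j = m * (k / m) + m := by rw [hj]; ring
    omega
  have hjek : j = e + k := by omega
  have hrj : S^[j] r = r := by
    rw [hj, Function.iterate_mul]
    exact Function.iterate_fixed hmeq _
  have hwj : dist (S^[e] (S^[k] w)) (S^[e] q) < δ0 / 8 := huprop _ hy2 e hem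
  have hSjw : S^[j] w = S^[e] (S^[k] w) := by
    rw [hjek, Function.iterate_add_apply]
  -- main estimate
  have hfar' := hqfar e
  have htri1 := dist_triangle p r (S^[j] w)
  have htri2 := dist_triangle p (S^[j] w) (S^[e] q)
  have hcomm1 : dist (S^[j] w) (S^[e] q) = dist (S^[e] (S^[k] w)) (S^[e] q) := by
    rw [hSjw]
  have hbig : δ0 / 4 < dist r (S^[j] w) := by
    have h1 : dist p (S^[e] q) ≤ dist p r + dist r (S^[j] w) + dist (S^[j] w) (S^[e] q) := by
      have := dist_triangle p (S^[j] w) (S^[e] q)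
      linarith [dist_triangle p r (S^[j] w)]
    have h2 : dist p r < ε' := by rw [dist_comm] at hrd ⊢; exact hrd
    rw [hcomm1] at h1
    linarith
  by_cases hc : δ0 / 8 ≤ dist (S^[j] p) (S^[j] r)
  · refine ⟨r, hrc, ?_, j, hc⟩
    calc dist p r = dist p r := rfl
    _ < ε' := by rw [dist_comm] at hrd ⊢; exact hrd
    _ ≤ ε := hε'ε
  · push_neg at hc
    refine ⟨w, hwc, ?_, j, ?_⟩
    · calc dist p w = dist w p := dist_comm _ _
      _ < ε' := hwball
      _ ≤ ε := hε'ε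
    · have htri3 : dist (S^[j] r) (S^[j] w) ≤
        dist (S^[j] r) (S^[j] p) + dist (S^[j] p) (S^[j] w) := dist_triangle _ _ _
      rw [hrj] at htri3
      rw [hrj] at hc
      have h4 : dist r (S^[j] p) < δ0 / 8 := by rw [dist_comm]; exact hc
      linarith
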